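/- arXiv:2602.18353 — 2 statements merged into one kernel-verified Lean document; each statement's English description precedes it below -/
import Mathlib

section
/- Let (𝔻, ω) be the unit disc in ℂ equipped with the Poincaré metric of constant Gaussian curvature −K < 0. If η is a global 1-form on 𝔻 with dη = ω, then ‖η‖²_{L∞} ≥ 1/K. -/
/-!
Apply Green's theorem to the disc of radius `r < 1`: its `ω`-area `4πr² / (K(1 - r²))`
equals the circulation of `η` around the boundary circle, which is at most
`‖η‖_{L∞}` times the `ω`-length `4πr / (√K (1 - r²))` of that circle.  Hence
`r / √K ≤ ‖η‖_{L∞}` for every `r < 1`, and `r → 1` gives the bound.  Green's theorem is used on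
the rectangle `[0, r] × [0, 2π]` for the pullback of `η` under polar coordinates
`(ρ, θ) ↦ ρ e^{iθ}`, whose Jacobian is `ρ`.
-/

open Real Set Metric Filter Topology intervalIntegral Interval
open Complex (I)

-- The 1-form `a dx + b dy` at the point `z`, applied to the tangent vector `w`.
def oneForm (a b : ℂ → ℝ) (z w : ℂ) : ℝ := a z * w.re + b z * w.im

theorem oneForm_le_sqrt_mul_norm (a b : ℂ → ℝ) (z w : ℂ) :
    oneForm a b z w ≤ √(a z ^ 2 + b z ^ 2) * ‖w‖ := by
  have hcs : (oneForm a b z w) ^ 2 ≤ (a z ^ 2 + b z ^ 2) * ‖w‖ ^ 2 := by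
    rw [Complex.sq_norm, Complex.normSq_apply, oneForm]
    nlinarith [sq_nonneg (a z * w.im - b z * w.re)]
  calc oneForm a b z w ≤ √((a z ^ 2 + b z ^ 2) * ‖w‖ ^ 2) :=
        (le_abs_self _).trans (Real.abs_le_sqrt hcs)
    _ = √(a z ^ 2 + b z ^ 2) * ‖w‖ := by
        rw [Real.sqrt_mul' _ (by positivity), Real.sqrt_sq (norm_nonneg w)]

theorem hasDerivAt_circleMap_radius (θ ρ : ℝ) :
    HasDerivAt (fun r => circleMap 0 r θ) (circleMap 0 1 θ) ρ := by
  simpa [circleMap_zero] using (hasDerivAt_id' ρ).ofReal_comp.mul_const (Complex.exp (θ * I))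

theorem HasDerivAt.oneForm {a b : ℂ → ℝ} {γ w : ℝ → ℂ} {γ' w' : ℂ} {t : ℝ}
    (ha : DifferentiableAt ℝ a (γ t)) (hb : DifferentiableAt ℝ b (γ t))
    (hγ : HasDerivAt γ γ' t) (hw : HasDerivAt w w' t) :
    HasDerivAt (fun s => oneForm a b (γ s) (w s))
      (fderiv ℝ a (γ t) γ' * (w t).re + a (γ t) * w'.re +
        (fderiv ℝ b (γ t) γ' * (w t).im + b (γ t) * w'.im)) t := by
  have hre : HasDerivAt (fun s => (w s).re) w'.re t :=
    Complex.reCLM.hasFDerivAt.comp_hasDerivAt t hw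
  have him : HasDerivAt (fun s => (w s).im) w'.im t :=
    Complex.imCLM.hasFDerivAt.comp_hasDerivAt t hw
  exact ((ha.hasFDerivAt.comp_hasDerivAt t hγ).mul hre).add
    ((hb.hasFDerivAt.comp_hasDerivAt t hγ).mul him)

theorem DifferentiableAt.oneForm {E : Type*} [NormedAddCommGroup E] [NormedSpace ℝ E]
    {a b : ℂ → ℝ} {γ w : E → ℂ} {x : E}
    (ha : DifferentiableAt ℝ a (γ x)) (hb : DifferentiableAt ℝ b (γ x))
    (hγ : DifferentiableAt ℝ γ x) (hw : DifferentiableAt ℝ w x) :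
    DifferentiableAt ℝ (fun y => oneForm a b (γ y) (w y)) x :=
  ((ha.comp x hγ).mul (Complex.reCLM.differentiableAt.comp x hw)).add
    ((hb.comp x hγ).mul (Complex.imCLM.differentiableAt.comp x hw))

theorem antisymm_eq_curl_mul_cross (L M : ℂ →L[ℝ] ℝ) (u v : ℂ) :
    L u * v.re - L v * u.re + (M u * v.im - M v * u.im) =
      (M 1 - L I) * (u.re * v.im - u.im * v.re) := by
  have hcoord (N : ℂ →L[ℝ] ℝ) (z : ℂ) : N z = z.re * N 1 + z.im * N I := by
    have hz : z = z.re • (1 : ℂ) + z.im • I := by simp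
    conv_lhs => rw [hz, map_add, map_smul, map_smul, smul_eq_mul, smul_eq_mul]
  rw [hcoord L u, hcoord L v, hcoord M u, hcoord M v]
  ring

theorem polar_jacobian_eq (ρ θ : ℝ) :
    (circleMap 0 1 θ).re * (circleMap 0 ρ θ * I).im -
      (circleMap 0 1 θ).im * (circleMap 0 ρ θ * I).re = ρ := by
  simp only [circleMap_zero, Complex.mul_re, Complex.mul_im, Complex.I_re, Complex.I_im,
    Complex.ofReal_re, Complex.ofReal_im, Complex.exp_ofReal_mul_I_re,
    Complex.exp_ofReal_mul_I_im]
  linear_combination ρ * Real.cos_sq_add_sin_sq θ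

/- The pullback of `a dx + b dy` under `(ρ, θ) ↦ ρ e^{iθ}` is
`polarPullbackFst a b dρ + polarPullbackSnd a b dθ`. -/
noncomputable def polarPullbackFst (a b : ℂ → ℝ) (p : ℝ × ℝ) : ℝ :=
  oneForm a b (circleMap 0 p.1 p.2) (circleMap 0 1 p.2)

noncomputable def polarPullbackSnd (a b : ℂ → ℝ) (p : ℝ × ℝ) : ℝ :=
  oneForm a b (circleMap 0 p.1 p.2) (circleMap 0 p.1 p.2 * I)

section polarPullback

variable {a b : ℂ → ℝ} {p : ℝ × ℝ}

theorem differentiableAt_polarMap (p : ℝ × ℝ) :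
    DifferentiableAt ℝ (fun q : ℝ × ℝ => circleMap 0 q.1 q.2) p := by
  simp only [circleMap_zero]
  fun_prop

variable (ha : DifferentiableAt ℝ a (circleMap 0 p.1 p.2))
  (hb : DifferentiableAt ℝ b (circleMap 0 p.1 p.2))
include ha hb

theorem differentiableAt_polarPullbackFst : DifferentiableAt ℝ (polarPullbackFst a b) p := by
  refine DifferentiableAt.oneForm (γ := fun q : ℝ × ℝ => circleMap 0 q.1 q.2) ha hb
    (differentiableAt_polarMap p) ?_
  simp only [circleMap_zero]
  fun_prop

theorem differentiableAt_polarPullbackSnd : DifferentiableAt ℝ (polarPullbackSnd a b) p :=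
  DifferentiableAt.oneForm (γ := fun q : ℝ × ℝ => circleMap 0 q.1 q.2) ha hb
    (differentiableAt_polarMap p) ((differentiableAt_polarMap p).mul_const I)

-- `d` commutes with pullbacks; `polar_jacobian_eq` is the Jacobian of polar coordinates.
theorem polarPullback_curl :
    fderiv ℝ (polarPullbackSnd a b) p (1, 0) - fderiv ℝ (polarPullbackFst a b) p (0, 1) =
      p.1 * (fderiv ℝ b (circleMap 0 p.1 p.2) 1 - fderiv ℝ a (circleMap 0 p.1 p.2) I) := by
  obtain ⟨ρ, θ⟩ := p
  have hρ := (differentiableAt_polarPullbackSnd ha hb).hasFDerivAt.comp_hasDerivAt ρ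
    ((hasDerivAt_id' ρ).prodMk (hasDerivAt_const ρ θ))
  have hθ := (differentiableAt_polarPullbackFst ha hb).hasFDerivAt.comp_hasDerivAt θ
    ((hasDerivAt_const θ ρ).prodMk (hasDerivAt_id' θ))
  rw [hρ.unique (HasDerivAt.oneForm ha hb (hasDerivAt_circleMap_radius θ ρ)
      ((hasDerivAt_circleMap_radius θ ρ).mul_const I)),
    hθ.unique (HasDerivAt.oneForm ha hb (hasDerivAt_circleMap 0 ρ θ)
      (hasDerivAt_circleMap 0 1 θ))]
  linear_combination antisymm_eq_curl_mul_cross (fderiv ℝ a (circleMap 0 ρ θ))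
    (fderiv ℝ b (circleMap 0 ρ θ)) (circleMap 0 1 θ) (circleMap 0 ρ θ * I) +
    (fderiv ℝ b (circleMap 0 ρ θ) 1 - fderiv ℝ a (circleMap 0 ρ θ) I) * polar_jacobian_eq ρ θ

end polarPullback

/- Green's theorem on `[0, r] × [0, 2π]`: the edges `θ = 0` and `θ = 2π` cancel by periodicity,
and the pullback vanishes on the edge `ρ = 0`. -/
theorem integral_mul_curl_polar_eq_circulation {a b g : ℂ → ℝ} {r : ℝ} (hr : 0 ≤ r)
    (ha : ∀ z ∈ closedBall (0 : ℂ) r, DifferentiableAt ℝ a z)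
    (hb : ∀ z ∈ closedBall (0 : ℂ) r, DifferentiableAt ℝ b z)
    (hg : ContinuousOn g (closedBall 0 r))
    (hcurl : ∀ z ∈ closedBall (0 : ℂ) r, fderiv ℝ b z 1 - fderiv ℝ a z I = g z) :
    ∫ ρ in 0..r, ∫ θ in 0..2 * π, ρ * g (circleMap 0 ρ θ) =
      ∫ θ in 0..2 * π, polarPullbackSnd a b (r, θ) := by
  set R := [[0, r]] ×ˢ [[0, 2 * π]]
  have hmaps : MapsTo (fun p : ℝ × ℝ => circleMap 0 p.1 p.2) R (closedBall 0 r) := by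
    rintro p ⟨hp, -⟩
    rw [uIcc_of_le hr] at hp
    simpa [norm_circleMap_zero, abs_le] using ⟨by linarith [hp.1], hp.2⟩
  have hFst : ∀ p ∈ R, DifferentiableAt ℝ (polarPullbackFst a b) p := fun p hp =>
    differentiableAt_polarPullbackFst (ha _ (hmaps hp)) (hb _ (hmaps hp))
  have hSnd : ∀ p ∈ R, DifferentiableAt ℝ (polarPullbackSnd a b) p := fun p hp =>
    differentiableAt_polarPullbackSnd (ha _ (hmaps hp)) (hb _ (hmaps hp))
  have hdiv : ∀ p ∈ R, fderiv ℝ (polarPullbackSnd a b) p (1, 0) +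
      (-fderiv ℝ (polarPullbackFst a b) p) (0, 1) = p.1 * g (circleMap 0 p.1 p.2) := by
    intro p hp
    rw [neg_apply, ← sub_eq_add_neg,
      polarPullback_curl (ha _ (hmaps hp)) (hb _ (hmaps hp)), hcurl _ (hmaps hp)]
  have hinterior : ∀ p ∈ Ioo (min 0 r) (max 0 r) ×ˢ Ioo (min 0 (2 * π)) (max 0 (2 * π)) \ ∅,
      p ∈ R := fun p hp => ⟨Ioo_subset_Icc_self hp.1.1, Ioo_subset_Icc_self hp.1.2⟩
  have hcont : ContinuousOn (fun p : ℝ × ℝ => p.1 * g (circleMap 0 p.1 p.2)) R :=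
    continuous_fst.continuousOn.mul <|
      hg.comp (fun p _ => (differentiableAt_polarMap p).continuousAt.continuousWithinAt) hmaps
  have green := MeasureTheory.integral2_divergence_prod_of_hasFDerivAt_off_countable
    (polarPullbackSnd a b) (fun p => -polarPullbackFst a b p)
    (fderiv ℝ (polarPullbackSnd a b)) (fun p => -fderiv ℝ (polarPullbackFst a b) p)
    0 0 r (2 * π) ∅ countable_empty
    (fun p hp => (hSnd p hp).continuousAt.continuousWithinAt)
    (fun p hp => (hFst p hp).continuousAt.neg.continuousWithinAt)
    (fun p hp => (hSnd p (hinterior p hp)).hasFDerivAt)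
    (fun p hp => (hFst p (hinterior p hp)).hasFDerivAt.neg)
    ((hcont.integrableOn_compact (isCompact_uIcc.prod isCompact_uIcc)).congr_fun
      (fun p hp => (hdiv p hp).symm) (measurableSet_uIcc.prod measurableSet_uIcc))
  have hperiodic (x : ℝ) : polarPullbackFst a b (x, 2 * π) = polarPullbackFst a b (x, 0) := by
    simp only [polarPullbackFst, (periodic_circleMap 0 x).eq, (periodic_circleMap 0 1).eq]
  have hcenter (y : ℝ) : polarPullbackSnd a b (0, y) = 0 := by
    simp [polarPullbackSnd, oneForm]
  simp only [hperiodic, hcenter, sub_self, integral_zero, zero_add, sub_zero] at green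
  rw [← green]
  exact integral_congr fun x hx => integral_congr fun y hy => (hdiv (x, y) ⟨hx, hy⟩).symm

theorem integral_poincare_area_density {K r : ℝ} (hK : K ≠ 0) (hr : 0 ≤ r) (hr1 : r < 1) :
    ∫ ρ in (0 : ℝ)..r, 2 * π * (ρ * (4 / (K * (1 - ρ ^ 2) ^ 2))) =
      4 * π * r ^ 2 / (K * (1 - r ^ 2)) := by
  have hpos : ∀ x ∈ uIcc 0 r, 0 < 1 - x ^ 2 := by
    intro x hx
    rw [uIcc_of_le hr] at hx
    nlinarith [hx.1, hx.2]
  have hderiv : ∀ x ∈ uIcc 0 r, HasDerivAt (fun t => 4 * π / (K * (1 - t ^ 2)))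
      (2 * π * (x * (4 / (K * (1 - x ^ 2) ^ 2)))) x := by
    intro x hx
    have hx := hpos x hx
    refine ((hasDerivAt_const x (4 * π)).fun_div
      (((hasDerivAt_pow 2 x).const_sub 1).const_mul K) (mul_ne_zero hK hx.ne')).congr_deriv ?_
    field_simp
    ring
  have hcont :
      ContinuousOn (fun x => 2 * π * (x * (4 / (K * (1 - x ^ 2) ^ 2)))) (uIcc 0 r) :=
    ContinuousOn.mul continuousOn_const <| continuousOn_id.mul <| continuousOn_const.div
      (by fun_prop) fun x hx => by have := hpos x hx; positivity
  rw [intervalIntegral.integral_eq_sub_of_hasDerivAt hderiv hcont.intervalIntegrable]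
  have : 1 - r ^ 2 ≠ 0 := (hpos r right_mem_uIcc).ne'
  field_simp
  ring

theorem sq_div_le_of_area_le_length {K C r : ℝ} (hK : 0 < K) (hr : 0 < r) (hr1 : r < 1)
    (h : 4 * π * r ^ 2 / (K * (1 - r ^ 2)) ≤
      2 * π * (√(C * (4 / (K * (1 - r ^ 2) ^ 2))) * r)) :
    r ^ 2 / K ≤ C := by
  have hs : 0 < 1 - r ^ 2 := by nlinarith
  have hq : 2 * r / (K * (1 - r ^ 2)) ≤ √(C * (4 / (K * (1 - r ^ 2) ^ 2))) := by
    refine le_of_mul_le_mul_left ?_ (by positivity : 0 < 2 * π * r)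
    linear_combination h
  rw [Real.le_sqrt' (by positivity)] at hq
  refine le_of_mul_le_mul_right ?_ (by positivity : 0 < 4 / (K * (1 - r ^ 2) ^ 2))
  calc r ^ 2 / K * (4 / (K * (1 - r ^ 2) ^ 2)) = (2 * r / (K * (1 - r ^ 2))) ^ 2 := by
        field_simp; ring
    _ ≤ _ := hq

theorem sq_div_le_of_curl_eq_poincare {K C r : ℝ} {a b : ℂ → ℝ} (hK : 0 < K)
    (ha : ∀ z ∈ ball (0 : ℂ) 1, DifferentiableAt ℝ a z)
    (hb : ∀ z ∈ ball (0 : ℂ) 1, DifferentiableAt ℝ b z)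
    (hdη : ∀ z ∈ ball (0 : ℂ) 1,
      fderiv ℝ b z 1 - fderiv ℝ a z I = 4 / (K * (1 - ‖z‖ ^ 2) ^ 2))
    (hC : ∀ z ∈ ball (0 : ℂ) 1, (a z ^ 2 + b z ^ 2) / (4 / (K * (1 - ‖z‖ ^ 2) ^ 2)) ≤ C)
    (hr : 0 < r) (hr1 : r < 1) :
    r ^ 2 / K ≤ C := by
  have hball : closedBall (0 : ℂ) r ⊆ ball 0 1 := closedBall_subset_ball hr1
  have hcircle (θ : ℝ) : circleMap 0 r θ ∈ ball 0 1 := hball (by simp [abs_of_pos hr])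
  have hdensity : ContinuousOn (fun z : ℂ => 4 / (K * (1 - ‖z‖ ^ 2) ^ 2)) (closedBall 0 r) := by
    refine continuousOn_const.div (by fun_prop) fun z hz => ?_
    have : 0 < 1 - ‖z‖ ^ 2 := by nlinarith [norm_nonneg z, mem_ball_zero_iff.1 (hball hz)]
    positivity
  have hstokes := integral_mul_curl_polar_eq_circulation hr.le (fun z hz => ha z (hball hz))
    (fun z hz => hb z (hball hz)) hdensity (fun z hz => hdη z (hball hz))
  have harea : ∫ ρ in 0..r, ∫ θ in 0..2 * π,
      ρ * (4 / (K * (1 - ‖circleMap 0 ρ θ‖ ^ 2) ^ 2)) = 4 * π * r ^ 2 / (K * (1 - r ^ 2)) := by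
    simp only [norm_circleMap_zero, sq_abs, integral_const, smul_eq_mul, sub_zero]
    exact integral_poincare_area_density hK.ne' hr.le hr1
  have hlength : ∫ θ in 0..2 * π, polarPullbackSnd a b (r, θ) ≤
      2 * π * (√(C * (4 / (K * (1 - r ^ 2) ^ 2))) * r) := by
    have hpt (θ : ℝ) : polarPullbackSnd a b (r, θ) ≤ √(C * (4 / (K * (1 - r ^ 2) ^ 2))) * r := by
      have hnorm : ‖circleMap 0 r θ‖ = r := by simp [abs_of_pos hr]
      have hbound := hC _ (hcircle θ)
      have hs : 0 < 1 - r ^ 2 := by nlinarith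
      rw [hnorm, div_le_iff₀ (by positivity)] at hbound
      calc polarPullbackSnd a b (r, θ)
          ≤ √(a (circleMap 0 r θ) ^ 2 + b (circleMap 0 r θ) ^ 2) * ‖circleMap 0 r θ * I‖ :=
            oneForm_le_sqrt_mul_norm _ _ _ _
        _ ≤ _ := by rw [norm_mul, Complex.norm_I, mul_one, hnorm]; gcongr
    have hint : IntervalIntegrable (fun θ => polarPullbackSnd a b (r, θ)) MeasureTheory.volume
        0 (2 * π) :=
      (Continuous.continuousOn <| continuous_iff_continuousAt.2 fun θ =>
        ((differentiableAt_polarPullbackSnd (p := (r, θ)) (ha _ (hcircle θ))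
          (hb _ (hcircle θ))).continuousAt.comp
            (Continuous.prodMk_right r).continuousAt)).intervalIntegrable
    calc _ ≤ ∫ _ in 0..2 * π, √(C * (4 / (K * (1 - r ^ 2) ^ 2))) * r :=
          integral_mono_on (by positivity) hint intervalIntegrable_const fun θ _ => hpt θ
      _ = _ := by simp only [integral_const, sub_zero, smul_eq_mul]
  exact sq_div_le_of_area_le_length hK hr hr1 <|
    harea.symm.trans_le (hstokes.trans_le hlength)

/-- **Lemma 6.3 (the disc case).**

The Poincaré metric of Gaussian curvature `−K < 0` on the unit disc
`𝔻 = {z ∈ ℂ : |z| < 1}` is the conformal metric `λ(z) |dz|²` with conformal factor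
`λ(z) = 4 / (K (1 − |z|²)²)`, whose Kähler (area) form is `ω = λ dx ∧ dy`.

A global `1`-form on `𝔻` is written `η = a dx + b dy` with differentiable coefficients
`a, b : 𝔻 → ℝ`; then `dη = (∂b/∂x − ∂a/∂y) dx ∧ dy`, so the equation `dη = ω` reads
`∂b/∂x − ∂a/∂y = λ` on `𝔻` (hypothesis `hdη`; `fderiv ℝ b z 1` is `∂b/∂x` and
`fderiv ℝ a z Complex.I` is `∂a/∂y`).  The pointwise squared norm of `η` measured by `ω` is
`|η|²_ω(z) = (a(z)² + b(z)²) / λ(z)`.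

Conclusion: `‖η‖²_{L∞} = sup_𝔻 |η|²_ω ≥ 1/K`, expressed as: every upper bound `C` of
`|η|²_ω` on `𝔻` satisfies `1/K ≤ C`. -/
theorem statement12
    (K : ℝ) (hK : 0 < K)
    (a b : ℂ → ℝ)
    (ha : ∀ z ∈ Metric.ball (0 : ℂ) 1, DifferentiableAt ℝ a z)
    (hb : ∀ z ∈ Metric.ball (0 : ℂ) 1, DifferentiableAt ℝ b z)
    (hdη : ∀ z ∈ Metric.ball (0 : ℂ) 1,
      fderiv ℝ b z 1 - fderiv ℝ a z Complex.I =
        4 / (K * (1 - ‖z‖ ^ 2) ^ 2))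
    (C : ℝ)
    (hC : ∀ z ∈ Metric.ball (0 : ℂ) 1,
      (a z ^ 2 + b z ^ 2) / (4 / (K * (1 - ‖z‖ ^ 2) ^ 2)) ≤ C) :
    1 / K ≤ C := by
  have hradius : ∀ r ∈ Ioo (0 : ℝ) 1, r ^ 2 / K ≤ C := fun r hr =>
    sq_div_le_of_curl_eq_poincare hK ha hb hdη hC hr.1 hr.2
  have hlim : Tendsto (fun r : ℝ => r ^ 2 / K) (𝓝[<] 1) (𝓝 (1 / K)) := by
    simpa using (((continuous_pow 2).div_const K).tendsto (1 : ℝ)).mono_left nhdsWithin_le_nhds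
  exact le_of_tendsto hlim (eventually_of_mem (Ioo_mem_nhdsLT one_pos) hradius)
end

section
/- Let n, p, q be nonnegative integers with p ≤ q and k := p + q < n. Then (⌈k/2⌉ + 1)! / (n − ⌊k/2⌋)! ≤ (p + 1)! / (n − q)!. -/
/-!
STATEMENT 14. Let n, p, q be nonnegative integers with p ≤ q and k := p + q < n.  Then
(⌈k/2⌉ + 1)! / (n − ⌊k/2⌋)! ≤ (p + 1)! / (n − q)!.
-/

lemma aux14 (M : ℕ) (hM : 1 ≤ M) :
    ∀ d a : ℕ, ((a + d + 1).factorial : ℝ) / ((M + a + d).factorial : ℝ) ≤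
      ((a + 1).factorial : ℝ) / ((M + a).factorial : ℝ) := by
  intro d
  induction d with
  | zero => intro a; simp
  | succ d ih =>
    intro a
    have step : ((a + d + 1 + 1).factorial : ℝ) / ((M + a + d + 1).factorial : ℝ) ≤
        ((a + d + 1).factorial : ℝ) / ((M + a + d).factorial : ℝ) := by
      have n1 : ((a + d + 1 + 1).factorial : ℝ) = ((a:ℝ) + d + 1 + 1) * (a + d + 1).factorial := by
        rw [Nat.factorial_succ]; push_cast; ring
      have n2 : ((M + a + d + 1).factorial : ℝ) = ((M:ℝ) + a + d + 1) * (M + a + d).factorial := by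
        rw [Nat.factorial_succ]; push_cast; ring
      rw [n1, n2, mul_div_mul_comm]
      have hB : (0:ℝ) < ((M + a + d).factorial : ℝ) := by positivity
      have hA : (0:ℝ) ≤ ((a + d + 1).factorial : ℝ) / ((M + a + d).factorial : ℝ) := by
        positivity
      have hx : ((a : ℝ) + d + 1 + 1) / ((M : ℝ) + a + d + 1) ≤ 1 := by
        apply div_le_one_of_le₀
        · have : (1:ℝ) ≤ M := by exact_mod_cast hM
          linarith
        · positivity
      calc ((a : ℝ) + d + 1 + 1) / ((M : ℝ) + a + d + 1) *
            (((a + d + 1).factorial : ℝ) / ((M + a + d).factorial : ℝ))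
          ≤ 1 * (((a + d + 1).factorial : ℝ) / ((M + a + d).factorial : ℝ)) := by
            exact mul_le_mul_of_nonneg_right hx hA
        _ = _ := one_mul _
    have h2 := ih a
    calc ((a + (d+1) + 1).factorial : ℝ) / ((M + a + (d+1)).factorial : ℝ)
        = ((a + d + 1 + 1).factorial : ℝ) / ((M + a + d + 1).factorial : ℝ) := by ring_nf
      _ ≤ ((a + d + 1).factorial : ℝ) / ((M + a + d).factorial : ℝ) := step
      _ ≤ _ := h2

/-- **The combinatorial inequality from the proof of Theorem 1.2.**

For nonnegative integers `n, p, q` with `p ≤ q` and `k = p + q < n`,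
`(⌈k/2⌉ + 1)! / (n − ⌊k/2⌋)! ≤ (p + 1)! / (n − q)!` (as real numbers).  Here for a
natural number `k` the ceiling `⌈k/2⌉` is `(k + 1) / 2` and the floor `⌊k/2⌋` is `k / 2`
in natural-number division. -/
theorem statement14 (n p q : ℕ) (hpq : p ≤ q) (hk : p + q < n) :
    (((p + q + 1) / 2 + 1).factorial : ℝ) / ((n - (p + q) / 2).factorial : ℝ) ≤
      ((p + 1).factorial : ℝ) / ((n - q).factorial : ℝ) := by
  have hM : 1 ≤ n - (p + q) := by omega
  have h := aux14 (n - (p + q)) hM ((p + q + 1) / 2 - p) p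
  have e1 : p + ((p + q + 1) / 2 - p) + 1 = (p + q + 1) / 2 + 1 := by omega
  have e2 : n - (p + q) + p + ((p + q + 1) / 2 - p) = n - (p + q) / 2 := by omega
  have e3 : n - (p + q) + p = n - q := by omega
  rw [e1, e2, e3] at h
  exact h
end
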